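/- arXiv:1709.04378 — 4 statements merged into one kernel-verified Lean document; each statement's English description precedes it below -/
import Mathlib

section
/- Let d ≥ 2. There is a constant c < ∞ depending only on d such that for every bounded set A ⊆ ℝ^d, every 0 < ρ < 1, every maximal ρ-separated subset A^ρ of A, and every y ∈ A^ρ, one has Σ_{x ∈ A^ρ, dist(y,x) > 1} dist(y,x)^{1-d} ≤ c ρ^{-d} |A^ρ|^{1/d}, where |A^ρ| denotes the cardinality of A^ρ. -/
/-!
Order the points of `S` by their distance to `y`. The balls of radius `ρ / 2` around the
points of a `ρ`-separated set are disjoint, so comparing volumes shows that the `k`-th point,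
at distance `r > 1 ≥ ρ`, satisfies `k ≤ (4 r / ρ) ^ d`. Its contribution `r ^ (1 - d)` is
therefore at most `(4 / ρ) ^ (d - 1) * k ^ (1 / d - 1)`, and by concavity of `t ↦ t ^ (1 / d)`
the sum of `k ^ (1 / d - 1)` over `k ≤ |S|` is at most `d * |S| ^ (1 / d)`.
-/

/-- A set `S` is `ρ`-separated if any two distinct points of `S` are at distance at least `ρ`. -/
def IsSep {E : Type*} [PseudoMetricSpace E] (ρ : ℝ) (S : Set E) : Prop :=
  ∀ x ∈ S, ∀ y ∈ S, x ≠ y → ρ ≤ dist x y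

/-- The packing number `N_ρ(A)`: the maximal cardinality of a `ρ`-separated subset of `A`. -/
noncomputable def packNum {E : Type*} [PseudoMetricSpace E] (ρ : ℝ) (A : Set E) : ℕ :=
  sSup {n : ℕ | ∃ S : Finset E, ↑S ⊆ A ∧ IsSep ρ (S : Set E) ∧ S.card = n}

open Finset Metric MeasureTheory Module
open scoped ENNReal

theorem mul_rpow_sub_one_le_add_one_rpow_sub_rpow {p x : ℝ} (hp₀ : 0 ≤ p) (hp₁ : p ≤ 1)
    (hx : 0 ≤ x) : p * (x + 1) ^ (p - 1) ≤ (x + 1) ^ p - x ^ p := by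
  have := (Real.concaveOn_rpow hp₀ hp₁).le_slope_of_hasDerivAt (x := x) (y := x + 1) hx
    (by simp only [Set.mem_Ici]; positivity) (by linarith)
    (Real.hasDerivAt_rpow_const (Or.inl (by positivity)))
  simpa [slope_def_field] using this

theorem sum_range_add_one_rpow_sub_one_le {p : ℝ} (hp₀ : 0 < p) (hp₁ : p ≤ 1) (n : ℕ) :
    ∑ k ∈ range n, ((k : ℝ) + 1) ^ (p - 1) ≤ n ^ p / p := by
  rw [le_div_iff₀ hp₀, sum_mul]
  calc ∑ k ∈ range n, ((k : ℝ) + 1) ^ (p - 1) * p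
      ≤ ∑ k ∈ range n, (((k + 1 : ℕ) : ℝ) ^ p - (k : ℝ) ^ p) := by
        gcongr with k
        push_cast
        linarith [mul_rpow_sub_one_le_add_one_rpow_sub_rpow hp₀.le hp₁ k.cast_nonneg]
    _ = n ^ p := by
        rw [sum_range_sub (fun k : ℕ => (k : ℝ) ^ p)]
        simp [Real.zero_rpow hp₀.ne']

theorem sum_card_filter_le_le_sum_range {ι α : Type*} [LinearOrder α]
    (key : ι → α) {g : ℕ → ℝ} (hg : AntitoneOn g (Set.Ici 1)) (S : Finset ι) :
    ∑ x ∈ S, g #{x' ∈ S | key x' ≤ key x} ≤ ∑ k ∈ range #S, g (k + 1) := by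
  classical
  induction S using Finset.induction_on_max_value key with
  | empty => simp
  | insert a s ha hmax ih =>
    have hrank_a : #{x' ∈ insert a s | key x' ≤ key a} = #s + 1 := by
      rw [filter_true_of_mem (by simpa using hmax), card_insert_of_notMem ha]
    have hrank : ∀ x ∈ s,
        g #{x' ∈ insert a s | key x' ≤ key x} ≤ g #{x' ∈ s | key x' ≤ key x} := fun x hx =>
      hg (one_le_card.2 ⟨x, by simp [hx]⟩) (one_le_card.2 ⟨x, by simp [hx]⟩)
        (card_le_card (filter_subset_filter _ (subset_insert a s)))
    rw [sum_insert ha, card_insert_of_notMem ha, sum_range_succ, hrank_a, add_comm]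
    exact add_le_add ((sum_le_sum hrank).trans ih) le_rfl

theorem rpow_one_sub_le_rpow_one_div_sub_one {d : ℕ} (hd : d ≠ 0) {m s : ℝ} (hm : 0 < m)
    (hs : 0 ≤ s) (hms : m ≤ s ^ d) : s ^ (1 - (d : ℝ)) ≤ m ^ (1 / (d : ℝ) - 1) := by
  have hd' : (1 : ℝ) ≤ d := by exact_mod_cast Nat.one_le_iff_ne_zero.2 hd
  have hroot : m ^ (1 / (d : ℝ)) ≤ s := by
    calc m ^ (1 / (d : ℝ)) ≤ (s ^ d) ^ (1 / (d : ℝ)) := by gcongr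
      _ = s := by rw [one_div, Real.pow_rpow_inv_natCast hs hd]
  calc s ^ (1 - (d : ℝ)) ≤ (m ^ (1 / (d : ℝ))) ^ (1 - (d : ℝ)) :=
        Real.rpow_le_rpow_of_nonpos (by positivity) hroot (by linarith)
    _ = m ^ (1 / (d : ℝ) - 1) := by
        rw [← Real.rpow_mul hm.le]
        congr 1
        field_simp

section SeparatedSet

variable {E : Type*} [NormedAddCommGroup E] [NormedSpace ℝ E] [FiniteDimensional ℝ E]

theorem IsSep.card_filter_dist_le {ρ r : ℝ} {S : Finset E} (hS : IsSep ρ (S : Set E))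
    (hρ : 0 < ρ) (hr : ρ ≤ r) (y : E) :
    (#{x ∈ S | dist y x ≤ r} : ℝ) ≤ (4 * r / ρ) ^ finrank ℝ E := by
  have hr₀ : 0 < r := hρ.trans_le hr
  borelize E
  set μ : Measure E := Measure.addHaar
  set T := {x ∈ S | dist y x ≤ r}
  have hdisj : (T : Set E).PairwiseDisjoint (ball · (ρ / 2)) := fun a ha b hb hab =>
    ball_disjoint_ball (by linarith [hS a (mem_filter.1 ha).1 b (mem_filter.1 hb).1 hab])
  have hsub : ⋃ x ∈ T, ball x (ρ / 2) ⊆ ball y (4 * r / ρ * (ρ / 2)) := by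
    refine Set.iUnion₂_subset fun x hx z hz => ?_
    have hxy : dist x y ≤ r := dist_comm y x ▸ (mem_filter.1 hx).2
    rw [mem_ball] at hz ⊢
    calc dist z y ≤ dist z x + dist x y := dist_triangle z x y
      _ < 4 * r / ρ * (ρ / 2) := by field_simp; linarith
  have hvol : (#T : ℝ≥0∞) * μ (ball 0 (ρ / 2))
      ≤ ENNReal.ofReal ((4 * r / ρ) ^ finrank ℝ E) * μ (ball 0 (ρ / 2)) :=
    calc (#T : ℝ≥0∞) * μ (ball 0 (ρ / 2)) = ∑ x ∈ T, μ (ball x (ρ / 2)) := by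
          simp [Measure.addHaar_ball_center]
      _ = μ (⋃ x ∈ T, ball x (ρ / 2)) :=
          (measure_biUnion_finset hdisj fun _ _ => measurableSet_ball).symm
      _ ≤ μ (ball y (4 * r / ρ * (ρ / 2))) := measure_mono hsub
      _ = _ := Measure.addHaar_ball_mul_of_pos μ y (by positivity) _
  have hcard := (ENNReal.mul_le_mul_iff_left (measure_ball_pos μ 0 (by positivity)).ne'
    measure_ball_lt_top.ne).1 hvol
  rwa [← ENNReal.ofReal_natCast, ENNReal.ofReal_le_ofReal_iff (by positivity)] at hcard

theorem IsSep.sum_filter_one_lt_dist_rpow_le {d : ℕ} (hd : finrank ℝ E = d) (hd₀ : d ≠ 0)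
    {ρ : ℝ} {S : Finset E} (hS : IsSep ρ (S : Set E)) (hρ₀ : 0 < ρ) (hρ₁ : ρ ≤ 1) (y : E) :
    ∑ x ∈ S with 1 < dist y x, dist y x ^ (1 - (d : ℝ))
      ≤ d * (4 / ρ) ^ ((d : ℝ) - 1) * (#S : ℝ) ^ (1 / (d : ℝ)) := by
  have hd₁ : (1 : ℝ) ≤ d := by exact_mod_cast Nat.one_le_iff_ne_zero.2 hd₀
  set C : ℝ := (4 / ρ) ^ ((d : ℝ) - 1)
  set g : ℕ → ℝ := fun k => (k : ℝ) ^ (1 / (d : ℝ) - 1)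
  have hg : AntitoneOn g (Set.Ici 1) := fun a ha b _ hab =>
    Real.rpow_le_rpow_of_nonpos (by exact_mod_cast ha) (by exact_mod_cast hab)
      (by rw [sub_nonpos, div_le_one (by positivity)]; exact hd₁)
  have hterm : ∀ x ∈ S, (if 1 < dist y x then dist y x ^ (1 - (d : ℝ)) else 0)
      ≤ C * g #{x' ∈ S | dist y x' ≤ dist y x} := by
    intro x hx
    split_ifs with h1
    · have hrank := hS.card_filter_dist_le hρ₀ (hρ₁.trans h1.le) y
      rw [hd] at hrank
      have hrank₀ : (0 : ℝ) < #{x' ∈ S | dist y x' ≤ dist y x} := by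
        exact_mod_cast card_pos.2 ⟨x, by simp [hx]⟩
      calc dist y x ^ (1 - (d : ℝ)) = (ρ / 4 * (4 * dist y x / ρ)) ^ (1 - (d : ℝ)) := by
            congr 1; field_simp
        _ = C * (4 * dist y x / ρ) ^ (1 - (d : ℝ)) := by
            rw [Real.mul_rpow (by positivity) (by positivity), ← inv_div,
              Real.inv_rpow (by positivity), ← Real.rpow_neg (by positivity), neg_sub]
        _ ≤ C * g #{x' ∈ S | dist y x' ≤ dist y x} := by
            gcongr
            exact rpow_one_sub_le_rpow_one_div_sub_one hd₀ hrank₀ (by positivity) hrank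
    · positivity
  calc ∑ x ∈ S with 1 < dist y x, dist y x ^ (1 - (d : ℝ))
      = ∑ x ∈ S, if 1 < dist y x then dist y x ^ (1 - (d : ℝ)) else 0 := sum_filter _ _
    _ ≤ ∑ x ∈ S, C * g #{x' ∈ S | dist y x' ≤ dist y x} := sum_le_sum hterm
    _ ≤ C * ∑ k ∈ range #S, g (k + 1) := by
        rw [← mul_sum]
        gcongr
        exact sum_card_filter_le_le_sum_range (dist y) hg S
    _ ≤ C * ((#S : ℝ) ^ (1 / (d : ℝ)) / (1 / (d : ℝ))) := by
        gcongr
        simp only [g, Nat.cast_add, Nat.cast_one]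
        exact sum_range_add_one_rpow_sub_one_le (by positivity)
          ((div_le_one (by positivity)).2 hd₁) #S
    _ = d * C * (#S : ℝ) ^ (1 / (d : ℝ)) := by field_simp

end SeparatedSet

/-- There is a constant c depending only on d ≥ 2 such that for any bounded A, any 0 < ρ < 1,
any maximal ρ-separated subset A^ρ of A and any y ∈ A^ρ,
Σ_{x ∈ A^ρ, dist(y,x) > 1} dist(y,x)^{1-d} ≤ c ρ^{-d} |A^ρ|^{1/d}. -/
theorem stmt8 (d : ℕ) (hd : 2 ≤ d) :
    ∃ c : ℝ, 0 < c ∧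
      ∀ (A : Set (EuclideanSpace ℝ (Fin d))), Bornology.IsBounded A →
      ∀ ρ : ℝ, 0 < ρ → ρ < 1 →
      ∀ S : Finset (EuclideanSpace ℝ (Fin d)), ↑S ⊆ A →
        IsSep ρ (S : Set (EuclideanSpace ℝ (Fin d))) → S.card = packNum ρ A →
      ∀ y ∈ S,
        (∑ x ∈ S.filter (fun x => 1 < dist y x), dist y x ^ (1 - (d : ℝ)))
          ≤ c * ρ⁻¹ ^ d * (S.card : ℝ) ^ (1 / (d : ℝ)) := by
  refine ⟨d * 4 ^ d, by positivity, fun A _ ρ hρ₀ hρ₁ S _ hS _ y _ => ?_⟩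
  have hconst : (4 / ρ) ^ ((d : ℝ) - 1) ≤ 4 ^ d * ρ⁻¹ ^ d :=
    calc (4 / ρ) ^ ((d : ℝ) - 1) ≤ (4 / ρ) ^ (d : ℝ) :=
          Real.rpow_le_rpow_of_exponent_le (by rw [le_div_iff₀ hρ₀]; linarith) (by linarith)
      _ = 4 ^ d * ρ⁻¹ ^ d := by rw [Real.rpow_natCast, div_eq_mul_inv, mul_pow]
  calc ∑ x ∈ S with 1 < dist y x, dist y x ^ (1 - (d : ℝ))
      ≤ d * (4 / ρ) ^ ((d : ℝ) - 1) * (#S : ℝ) ^ (1 / (d : ℝ)) :=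
        hS.sum_filter_one_lt_dist_rpow_le finrank_euclideanSpace_fin (by omega) hρ₀ hρ₁.le y
    _ ≤ d * (4 ^ d * ρ⁻¹ ^ d) * (#S : ℝ) ^ (1 / (d : ℝ)) := by gcongr
    _ = d * 4 ^ d * ρ⁻¹ ^ d * (#S : ℝ) ^ (1 / (d : ℝ)) := by ring
end

section
/- Let d ≥ 1 and let A = [0,1]^d ⊆ ℝ^d. Then the limit lim_{ρ→0+} ρ^d N_ρ(A) exists and satisfies 0 < lim_{ρ→0+} ρ^d N_ρ(A) < ∞ (in fact the limit is at least 1). -/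
/-!
Write `F ρ = ρ ^ d * N_ρ([0,1]^d)`. A square grid of mesh `ρ` gives `F ρ ≥ 1`, and pigeonholing
into cubes of side `ρ / (d + 1)` gives `F ρ ≤ (d + 2) ^ d` for `ρ ≤ 1`. Shrinking a maximal
`σ`-packing by the factor `k (1 + σ)` and placing `k ^ d` copies of it in the cells of a
`k × ⋯ × k` grid with gaps of width `σ` shows `N_{σ / (k (1 + σ))} ≥ k ^ d N_σ`; with `k ≈ σ / ρ`
this gives `F ρ ≥ (1 - 2σ) ^ d F σ` whenever `ρ < σ ^ 2`. Hence `liminf F ≥ limsup F` at `0⁺`.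
-/

open Filter Set Topology

section PackingNumber

variable {E : Type*} [PseudoMetricSpace E] {ρ ρ' : ℝ} {A : Set E} {M : ℕ}

theorem IsSep.mono {S : Set E} (h : ρ ≤ ρ') (hS : IsSep ρ' S) : IsSep ρ S :=
  fun x hx y hy hxy => h.trans (hS x hx y hy hxy)

theorem bddAbove_packNum_set (hM : ∀ S : Finset E, ↑S ⊆ A → IsSep ρ (S : Set E) → S.card ≤ M) :
    BddAbove {n : ℕ | ∃ S : Finset E, (S : Set E) ⊆ A ∧ IsSep ρ (S : Set E) ∧ S.card = n} :=
  ⟨M, by rintro n ⟨S, hSA, hS, rfl⟩; exact hM S hSA hS⟩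

theorem card_le_packNum (hM : ∀ S : Finset E, ↑S ⊆ A → IsSep ρ (S : Set E) → S.card ≤ M)
    {S : Finset E} (hSA : ↑S ⊆ A) (hS : IsSep ρ (S : Set E)) : S.card ≤ packNum ρ A :=
  le_csSup (bddAbove_packNum_set hM) ⟨S, hSA, hS, rfl⟩

theorem exists_card_eq_packNum
    (hM : ∀ S : Finset E, ↑S ⊆ A → IsSep ρ (S : Set E) → S.card ≤ M) :
    ∃ S : Finset E, ↑S ⊆ A ∧ IsSep ρ (S : Set E) ∧ S.card = packNum ρ A :=
  Nat.sSup_mem (s := {n : ℕ | ∃ S : Finset E, (S : Set E) ⊆ A ∧ IsSep ρ (S : Set E) ∧ S.card = n})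
    ⟨0, ∅, by simp, by simp [IsSep], rfl⟩ (bddAbove_packNum_set hM)

theorem packNum_le (hM : ∀ S : Finset E, ↑S ⊆ A → IsSep ρ (S : Set E) → S.card ≤ M) :
    packNum ρ A ≤ M := by
  obtain ⟨S, hSA, hS, hcard⟩ := exists_card_eq_packNum hM
  exact hcard ▸ hM S hSA hS

theorem packNum_anti (hM : ∀ S : Finset E, ↑S ⊆ A → IsSep ρ (S : Set E) → S.card ≤ M)
    (h : ρ ≤ ρ') : packNum ρ' A ≤ packNum ρ A := by
  obtain ⟨S, hSA, hS, hcard⟩ :=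
    exists_card_eq_packNum (M := M) fun S hSA hS => hM S hSA (hS.mono h)
  exact hcard ▸ card_le_packNum hM hSA (hS.mono h)

end PackingNumber

theorem tendsto_limsup_of_eventually_le_add {α : Type*} {l : Filter α} [l.NeBot] {F : α → ℝ}
    (h_le : IsBoundedUnder (· ≤ ·) l F) (h_ge : IsBoundedUnder (· ≥ ·) l F)
    (h : ∀ ε > 0, ∀ᶠ σ in l, ∀ᶠ ρ in l, F σ ≤ F ρ + ε) :
    Tendsto F l (𝓝 (limsup F l)) := by
  refine tendsto_of_le_liminf_of_limsup_le ?_ le_rfl h_le h_ge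
  refine le_of_forall_pos_le_add fun ε hε => ?_
  obtain ⟨σ, hσ, hσρ⟩ := ((frequently_lt_of_lt_limsup h_ge.isCoboundedUnder_le
    (sub_lt_self _ (half_pos hε))).and_eventually (h _ (half_pos hε))).exists
  have : F σ - ε / 2 ≤ liminf F l :=
    le_liminf_of_le h_le.isCoboundedUnder_ge (hσρ.mono fun ρ hρ => by linarith)
  linarith

section UnitCube

variable {d : ℕ} {ρ : ℝ}

abbrev unitCube (d : ℕ) : Set (EuclideanSpace ℝ (Fin d)) := {x | ∀ i, x i ∈ Icc (0 : ℝ) 1}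

theorem card_le_of_isSep_unitCube (hρ : 0 < ρ) {S : Finset (EuclideanSpace ℝ (Fin d))}
    (hSA : ↑S ⊆ unitCube d) (hS : IsSep ρ (S : Set (EuclideanSpace ℝ (Fin d)))) :
    S.card ≤ (⌊(d + 1) / ρ⌋₊ + 1) ^ d := by
  classical
  set s : ℝ := ρ / (d + 1) with hs_def
  have hs : 0 < s := by positivity
  let cell : EuclideanSpace ℝ (Fin d) → Fin d → ℕ := fun x i => ⌊x i / s⌋₊
  have hcell : ∀ x ∈ S, cell x ∈ Fintype.piFinset fun _ => Finset.range (⌊(d + 1) / ρ⌋₊ + 1) := by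
    intro x hx
    simp only [Fintype.mem_piFinset, Finset.mem_range, Nat.lt_succ_iff]
    intro i
    refine Nat.floor_le_floor ?_
    rw [hs_def, div_div_eq_mul_div]
    gcongr
    exact mul_le_of_le_one_left (by positivity) (hSA hx i).2
  have hinj : Set.InjOn cell S := by
    intro x hx y hy hxy
    by_contra hne
    have hcoord : ∀ i, dist (x i) (y i) ^ 2 ≤ s ^ 2 := by
      intro i
      have hfloor : ⌊x i / s⌋ = ⌊y i / s⌋ := by
        have := congrFun hxy i
        rw [← Int.natCast_floor_eq_floor (div_nonneg (hSA hx i).1 hs.le),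
          ← Int.natCast_floor_eq_floor (div_nonneg (hSA hy i).1 hs.le)]
        exact congrArg _ this
      have := Int.abs_sub_lt_one_of_floor_eq_floor hfloor
      rw [← sub_div, abs_div, abs_of_pos hs, div_lt_one hs] at this
      rw [Real.dist_eq]
      exact pow_le_pow_left₀ (abs_nonneg _) this.le 2
    have hdist : dist x y < ρ := by
      rw [EuclideanSpace.dist_eq, Real.sqrt_lt' hρ]
      calc ∑ i, dist (x i) (y i) ^ 2 ≤ ∑ _i : Fin d, s ^ 2 := Finset.sum_le_sum fun i _ => hcoord i
        _ = d * s ^ 2 := by simp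
        _ < (s * (d + 1)) ^ 2 := by nlinarith [sq_pos_of_pos hs]
        _ = ρ ^ 2 := by rw [hs_def, div_mul_cancel₀ _ (by positivity)]
    exact (hS x hx y hy hne).not_gt hdist
  calc S.card ≤ (Fintype.piFinset fun _ : Fin d => Finset.range (⌊(d + 1) / ρ⌋₊ + 1)).card :=
        Finset.card_le_card_of_injOn cell hcell hinj
    _ = (⌊(d + 1) / ρ⌋₊ + 1) ^ d := by simp

theorem packNum_unitCube_le (hρ : 0 < ρ) :
    (packNum ρ (unitCube d) : ℝ) ≤ ((d + 1) / ρ + 1) ^ d := by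
  have := packNum_le (A := unitCube d) fun _ => card_le_of_isSep_unitCube hρ
  calc (packNum ρ (unitCube d) : ℝ) ≤ ((⌊(d + 1) / ρ⌋₊ + 1 : ℕ) : ℝ) ^ d := by exact_mod_cast this
    _ ≤ ((d + 1) / ρ + 1) ^ d := by
      push_cast
      gcongr
      exact Nat.floor_le (by positivity)

theorem packNum_unitCube_anti {ρ' : ℝ} (hρ : 0 < ρ) (h : ρ ≤ ρ') :
    packNum ρ' (unitCube d) ≤ packNum ρ (unitCube d) :=
  packNum_anti (fun _ => card_le_of_isSep_unitCube hρ) h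

theorem card_le_packNum_unitCube (hρ : 0 < ρ) {S : Finset (EuclideanSpace ℝ (Fin d))}
    (hSA : ↑S ⊆ unitCube d) (hS : IsSep ρ (S : Set (EuclideanSpace ℝ (Fin d)))) :
    S.card ≤ packNum ρ (unitCube d) :=
  card_le_packNum (fun _ => card_le_of_isSep_unitCube hρ) hSA hS

end UnitCube

section Grid

variable {d k : ℕ}

def gridPoint (s : ℝ) (j : Fin d → Fin k) : EuclideanSpace ℝ (Fin d) :=
  WithLp.toLp 2 fun i => s * (j i : ℕ)

@[simp]
theorem gridPoint_apply (s : ℝ) (j : Fin d → Fin k) (i : Fin d) :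
    gridPoint s j i = s * (j i : ℕ) :=
  rfl

theorem exists_one_le_abs_sub_of_ne {j j' : Fin d → Fin k} (h : j ≠ j') :
    ∃ i, (1 : ℝ) ≤ |((j i : ℕ) : ℝ) - (j' i : ℕ)| := by
  obtain ⟨i, hi⟩ := Function.ne_iff.mp h
  exact ⟨i, Nat.pairwise_one_le_dist (Fin.val_injective.ne hi)⟩

theorem le_dist_gridPoint {s : ℝ} (hs : 0 ≤ s) {j j' : Fin d → Fin k} (h : j ≠ j') :
    s ≤ dist (gridPoint s j) (gridPoint s j') := by
  obtain ⟨i, hi⟩ := exists_one_le_abs_sub_of_ne h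
  calc s ≤ s * |((j i : ℕ) : ℝ) - (j' i : ℕ)| := le_mul_of_one_le_right hs hi
    _ = dist (gridPoint s j i) (gridPoint s j' i) := by
      rw [Real.dist_eq, gridPoint_apply, gridPoint_apply, ← mul_sub, abs_mul, abs_of_nonneg hs]
    _ ≤ dist (gridPoint s j) (gridPoint s j') := PiLp.dist_apply_le _ _ i

theorem le_dist_add_gridPoint {ρ : ℝ} (hρ : 0 ≤ ρ) {x y : EuclideanSpace ℝ (Fin d)}
    (hx : x ∈ unitCube d) (hy : y ∈ unitCube d) (hxy : x ≠ y → ρ ≤ dist x y)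
    {j j' : Fin d → Fin k} (hne : (x, j) ≠ (y, j')) :
    ρ ≤ dist (x + gridPoint (1 + ρ) j) (y + gridPoint (1 + ρ) j') := by
  by_cases hj : j = j'
  · subst hj
    rw [dist_add_right]
    exact hxy fun h => hne (h ▸ rfl)
  obtain ⟨i, hi⟩ := exists_one_le_abs_sub_of_ne hj
  have hxy_i : |x i - y i| ≤ 1 := abs_sub_le_of_nonneg_of_le (hx i).1 (hx i).2 (hy i).1 (hy i).2
  have h1ρ : |1 + ρ| = 1 + ρ := abs_of_nonneg (by linarith)
  calc ρ ≤ (1 + ρ) * |((j i : ℕ) : ℝ) - (j' i : ℕ)| - |x i - y i| := by nlinarith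
    _ ≤ |(x i - y i) + (1 + ρ) * (((j i : ℕ) : ℝ) - (j' i : ℕ))| := by
      have := abs_add_le (x i - y i + (1 + ρ) * (((j i : ℕ) : ℝ) - (j' i : ℕ))) (-(x i - y i))
      rw [abs_neg, add_neg_cancel_comm, abs_mul, h1ρ] at this
      linarith
    _ = dist ((x + gridPoint (1 + ρ) j) i) ((y + gridPoint (1 + ρ) j') i) := by
      simp only [Real.dist_eq, PiLp.add_apply, gridPoint_apply]
      ring_nf
    _ ≤ dist (x + gridPoint (1 + ρ) j) (y + gridPoint (1 + ρ) j') := PiLp.dist_apply_le _ _ i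

end Grid

section ScaledPackNum

variable {d : ℕ} {ρ σ : ℝ}

theorem pow_le_packNum_unitCube (hρ : 0 < ρ) : (⌊1 / ρ⌋₊ + 1) ^ d ≤ packNum ρ (unitCube d) := by
  classical
  have hinj : Function.Injective (gridPoint (d := d) (k := ⌊1 / ρ⌋₊ + 1) ρ) := fun j j' h =>
    by_contra fun hne => (le_dist_gridPoint hρ.le hne).not_gt (by rw [h, dist_self]; exact hρ)
  calc (⌊1 / ρ⌋₊ + 1) ^ d = (Finset.univ.image (gridPoint (d := d) ρ)).card := by
        rw [Finset.card_image_of_injective _ hinj]; simp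
    _ ≤ packNum ρ (unitCube d) := card_le_packNum_unitCube hρ ?_ ?_
  · simp only [Finset.coe_image, Finset.coe_univ, Set.image_univ]
    rintro _ ⟨j, rfl⟩ i
    refine ⟨by simp only [gridPoint_apply]; positivity, ?_⟩
    calc ρ * ((j i : ℕ) : ℝ) ≤ ρ * ⌊1 / ρ⌋₊ := by
          gcongr; exact_mod_cast Nat.lt_succ_iff.1 (j i).isLt
      _ ≤ ρ * (1 / ρ) := by gcongr; exact Nat.floor_le (by positivity)
      _ = 1 := mul_one_div_cancel hρ.ne'
  · simp only [Finset.coe_image, Finset.coe_univ, Set.image_univ]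
    rintro _ ⟨j, rfl⟩ _ ⟨j', rfl⟩ hne
    exact le_dist_gridPoint hρ.le (ne_of_apply_ne _ hne)

theorem inv_smul_add_gridPoint_mem_unitCube (hρ : 0 ≤ ρ) {k : ℕ} {x : EuclideanSpace ℝ (Fin d)}
    (hx : x ∈ unitCube d) (j : Fin d → Fin k) :
    (k * (1 + ρ))⁻¹ • (x + gridPoint (1 + ρ) j) ∈ unitCube d := by
  intro i
  have hj : ((j i : ℕ) : ℝ) + 1 ≤ k := by exact_mod_cast (j i).isLt
  have hk : (0 : ℝ) < k := by linarith [(Nat.cast_nonneg (j i : ℕ) : (0 : ℝ) ≤ _)]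
  simp only [PiLp.smul_apply, PiLp.add_apply, gridPoint_apply, smul_eq_mul]
  rw [← div_eq_inv_mul]
  refine ⟨by have := (hx i).1; positivity, (div_le_one (by positivity)).2 ?_⟩
  nlinarith [(hx i).2]

theorem pow_mul_packNum_unitCube_le (hρ : 0 < ρ) {k : ℕ} (hk : 0 < k) :
    k ^ d * packNum ρ (unitCube d) ≤ packNum (ρ / (k * (1 + ρ))) (unitCube d) := by
  classical
  set c : ℝ := k * (1 + ρ)
  have hc : 0 < c := by positivity
  obtain ⟨S, hSA, hS, hcard⟩ :=
    exists_card_eq_packNum (A := unitCube d) fun _ => card_le_of_isSep_unitCube hρ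
  let P := S ×ˢ (Finset.univ : Finset (Fin d → Fin k))
  let Φ : EuclideanSpace ℝ (Fin d) × (Fin d → Fin k) → EuclideanSpace ℝ (Fin d) :=
    fun p => c⁻¹ • (p.1 + gridPoint (1 + ρ) p.2)
  have hsep : ∀ p ∈ P, ∀ q ∈ P, p ≠ q → ρ / c ≤ dist (Φ p) (Φ q) := by
    rintro ⟨x, j⟩ hp ⟨y, j'⟩ hq hne
    simp only [P, Finset.mem_product, Finset.mem_univ, and_true] at hp hq
    rw [dist_smul₀, norm_inv, Real.norm_of_nonneg hc.le, inv_mul_eq_div]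
    gcongr
    exact le_dist_add_gridPoint hρ.le (hSA hp) (hSA hq) (hS x hp y hq) hne
  have hinj : Set.InjOn Φ P := fun p hp q hq h =>
    by_contra fun hne => (hsep p hp q hq hne).not_gt (by rw [h, dist_self]; positivity)
  calc k ^ d * packNum ρ (unitCube d) = (P.image Φ).card := by
        rw [Finset.card_image_of_injOn hinj, Finset.card_product, hcard]; simp [mul_comm]
    _ ≤ packNum (ρ / c) (unitCube d) := card_le_packNum_unitCube (by positivity) ?_ ?_
  · simp only [Finset.coe_image, Set.image_subset_iff]
    rintro ⟨x, j⟩ hp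
    exact inv_smul_add_gridPoint_mem_unitCube hρ.le (hSA (Finset.mem_product.1 hp).1) j
  · simp only [Finset.coe_image]
    rintro _ ⟨p, hp, rfl⟩ _ ⟨q, hq, rfl⟩ hne
    exact hsep p hp q hq (ne_of_apply_ne _ hne)

noncomputable def scaledPackNum (d : ℕ) (ρ : ℝ) : ℝ := ρ ^ d * packNum ρ (unitCube d)

theorem one_le_scaledPackNum (hρ : 0 < ρ) : 1 ≤ scaledPackNum d ρ := by
  have hgrid : ((⌊1 / ρ⌋₊ + 1 : ℕ) : ℝ) ^ d ≤ packNum ρ (unitCube d) := by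
    exact_mod_cast pow_le_packNum_unitCube hρ
  have hfloor : 1 ≤ ρ * ((⌊1 / ρ⌋₊ + 1 : ℕ) : ℝ) := by
    push_cast
    calc 1 = ρ * (1 / ρ) := (mul_one_div_cancel hρ.ne').symm
      _ ≤ ρ * (⌊1 / ρ⌋₊ + 1) := by gcongr; exact (Nat.lt_floor_add_one _).le
  calc 1 ≤ (ρ * ((⌊1 / ρ⌋₊ + 1 : ℕ) : ℝ)) ^ d := one_le_pow₀ hfloor
    _ = ρ ^ d * ((⌊1 / ρ⌋₊ + 1 : ℕ) : ℝ) ^ d := mul_pow _ _ _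
    _ ≤ scaledPackNum d ρ := by unfold scaledPackNum; gcongr

theorem scaledPackNum_le (hρ : 0 < ρ) (hρ1 : ρ ≤ 1) : scaledPackNum d ρ ≤ (d + 2) ^ d :=
  calc scaledPackNum d ρ ≤ ρ ^ d * ((d + 1) / ρ + 1) ^ d := by
        unfold scaledPackNum; gcongr; exact packNum_unitCube_le hρ
    _ = (d + 1 + ρ) ^ d := by rw [← mul_pow, mul_add, mul_div_cancel₀ _ hρ.ne', mul_one]
    _ ≤ (d + 2) ^ d := pow_le_pow_left₀ (by positivity) (by linarith) d

theorem pow_one_sub_two_mul_mul_scaledPackNum_le (hσ : 0 < σ) (hσ2 : σ ≤ 1 / 2) (hρ : 0 < ρ)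
    (hρσ : ρ < σ ^ 2) : (1 - 2 * σ) ^ d * scaledPackNum d σ ≤ scaledPackNum d ρ := by
  set k := ⌊σ / (ρ * (1 + σ))⌋₊
  have hden : 0 < ρ * (1 + σ) := by positivity
  have hk_le : (k : ℝ) ≤ σ / (ρ * (1 + σ)) := Nat.floor_le (by positivity)
  have hk_lt : σ < (k + 1) * (ρ * (1 + σ)) := (div_lt_iff₀ hden).1 (Nat.lt_floor_add_one _)
  have hk : 0 < k := Nat.floor_pos.2 <| (one_le_div hden).2 (by nlinarith)
  have hρk : ρ ≤ σ / (k * (1 + σ)) := by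
    rw [le_div_iff₀ (by positivity)]
    rw [le_div_iff₀ hden] at hk_le
    linarith
  have hcopies : (k : ℝ) ^ d * packNum σ (unitCube d) ≤ packNum ρ (unitCube d) := by
    exact_mod_cast (pow_mul_packNum_unitCube_le hσ hk).trans (packNum_unitCube_anti hρ hρk)
  have hσk : σ * (1 - 2 * σ) ≤ ρ * k := by nlinarith
  calc (1 - 2 * σ) ^ d * scaledPackNum d σ
      = (σ * (1 - 2 * σ)) ^ d * packNum σ (unitCube d) := by
        unfold scaledPackNum; rw [mul_pow]; ring
    _ ≤ (ρ * k) ^ d * packNum σ (unitCube d) := by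
        gcongr; nlinarith
    _ = ρ ^ d * ((k : ℝ) ^ d * packNum σ (unitCube d)) := by rw [mul_pow, mul_assoc]
    _ ≤ scaledPackNum d ρ := by unfold scaledPackNum; gcongr

theorem eventually_eventually_scaledPackNum_le_add {ε : ℝ} (hε : 0 < ε) :
    ∀ᶠ σ in 𝓝[>] 0, ∀ᶠ ρ in 𝓝[>] 0, scaledPackNum d σ ≤ scaledPackNum d ρ + ε := by
  have hlim : Tendsto (fun σ : ℝ => (1 - (1 - 2 * σ) ^ d) * (d + 2) ^ d) (𝓝 0) (𝓝 0) := by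
    have : Continuous fun σ : ℝ => (1 - (1 - 2 * σ) ^ d) * (d + 2) ^ d := by fun_prop
    simpa using this.tendsto 0
  filter_upwards [nhdsWithin_le_nhds (hlim.eventually (gt_mem_nhds hε)),
    Ioo_mem_nhdsGT (by norm_num : (0 : ℝ) < 1 / 2)] with σ hσε ⟨hσ, hσ2⟩
  filter_upwards [Ioo_mem_nhdsGT (pow_pos hσ 2)] with ρ ⟨hρ, hρσ⟩
  have hcomp := pow_one_sub_two_mul_mul_scaledPackNum_le (d := d) hσ hσ2.le hρ hρσ
  have hbound := mul_le_mul_of_nonneg_left (scaledPackNum_le (d := d) hσ (by linarith))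
    (sub_nonneg.2 (pow_le_one₀ (by linarith) (by linarith) : (1 - 2 * σ) ^ d ≤ 1))
  linarith

end ScaledPackNum

theorem stmt9_general (d : ℕ) :
    ∃ l : ℝ, 1 ≤ l ∧
      Filter.Tendsto
        (fun ρ : ℝ =>
          ρ ^ d * (packNum ρ {x : EuclideanSpace ℝ (Fin d) | ∀ i, x i ∈ Set.Icc (0:ℝ) 1} : ℝ))
        (nhdsWithin 0 (Set.Ioi 0)) (nhds l) := by
  have h_ge : ∀ᶠ ρ in 𝓝[>] 0, 1 ≤ scaledPackNum d ρ :=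
    eventually_nhdsWithin_of_forall fun _ => one_le_scaledPackNum
  have h_le : ∀ᶠ ρ in 𝓝[>] 0, scaledPackNum d ρ ≤ (d + 2) ^ d := by
    filter_upwards [Ioo_mem_nhdsGT one_pos] with ρ ⟨hρ, hρ1⟩
    exact scaledPackNum_le hρ hρ1.le
  have hbdd_le : IsBoundedUnder (· ≤ ·) (𝓝[>] 0) (scaledPackNum d) := ⟨_, h_le⟩
  have hbdd_ge : IsBoundedUnder (· ≥ ·) (𝓝[>] 0) (scaledPackNum d) := ⟨_, h_ge⟩
  exact ⟨_, le_limsup_of_frequently_le h_ge.frequently hbdd_le,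
    tendsto_limsup_of_eventually_le_add hbdd_le hbdd_ge fun _ hε =>
      eventually_eventually_scaledPackNum_le_add hε⟩

/-- For A = [0,1]^d, the limit of ρ^d N_ρ(A) as ρ → 0+ exists, and it lies in (0,∞);
in fact it is at least 1. -/
theorem stmt9 (d : ℕ) (hd : 1 ≤ d) :
    ∃ l : ℝ, 1 ≤ l ∧
      Filter.Tendsto
        (fun ρ : ℝ =>
          ρ ^ d * (packNum ρ {x : EuclideanSpace ℝ (Fin d) | ∀ i, x i ∈ Set.Icc (0:ℝ) 1} : ℝ))
        (nhdsWithin 0 (Set.Ioi 0)) (nhds l) :=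
  stmt9_general d
end

section
/- Let d ≥ 1, let ρ > 0, let A ⊆ ℝ^d be a bounded nonempty set whose packing number N = N_ρ(A) satisfies N^{ρ/200} ≥ 2, and let ε = ρ/50. Then for every real z ≥ −(ε/4)·log N one has |(1 − e^{−z}/N^ε)^{N^ε − N^{2ε/3}} − exp(−e^{−z})| ≤ N^{−ε/12}. -/
namespace Real

lemma exp_neg_div_one_sub_le {t : ℝ} (ht : t < 1) : exp (-(t / (1 - t))) ≤ 1 - t := by
  have h1t : 0 < 1 - t := sub_pos.2 ht
  have h : (1 - t)⁻¹ ≤ exp (t / (1 - t)) := by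
    calc (1 - t)⁻¹ = t / (1 - t) + 1 := by field_simp; ring
      _ ≤ exp (t / (1 - t)) := add_one_le_exp _
  rw [exp_neg]
  exact (inv_le_comm₀ h1t (exp_pos _)).1 h

lemma exp_sub_one_le_mul_exp (x : ℝ) : exp x - 1 ≤ x * exp x := by
  have h := mul_le_mul_of_nonneg_right (one_sub_le_exp_neg x) (exp_pos x).le
  rw [← exp_add, neg_add_cancel, exp_zero] at h
  linarith

variable {M m u : ℝ}

lemma exp_neg_le_one_sub_div_rpow (hM : 0 < M) (hmM : m < M) (hu : 0 ≤ u) (hum : u ≤ m) :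
    exp (-u) ≤ (1 - u / M) ^ (M - m) := by
  have ht1 : u / M < 1 := (div_lt_one hM).2 (hum.trans_lt hmM)
  have h1t : 0 < 1 - u / M := sub_pos.2 ht1
  have hexp : -u ≤ -(u / M / (1 - u / M)) * (M - m) := by
    have hkey : u / M / (1 - u / M) * (M - m) ≤ u := by
      have h1tM : u * (1 - u / M) * M = u * (M - u) := by field_simp
      rw [div_mul_eq_mul_div, div_le_iff₀ h1t, div_mul_eq_mul_div, div_le_iff₀ hM]
      nlinarith
    linarith
  calc exp (-u) ≤ exp (-(u / M / (1 - u / M)) * (M - m)) := exp_le_exp.2 hexp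
    _ = exp (-(u / M / (1 - u / M))) ^ (M - m) := exp_mul _ _
    _ ≤ (1 - u / M) ^ (M - m) :=
        rpow_le_rpow (exp_pos _).le (exp_neg_div_one_sub_le ht1) (sub_nonneg.2 hmM.le)

lemma one_sub_div_rpow_le_exp (hM : 0 < M) (hmM : m ≤ M) (huM : u ≤ M) :
    (1 - u / M) ^ (M - m) ≤ exp (m * u / M - u) :=
  calc (1 - u / M) ^ (M - m) ≤ exp (-(u / M)) ^ (M - m) :=
        rpow_le_rpow (sub_nonneg.2 ((div_le_one hM).2 huM)) (one_sub_le_exp_neg _)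
          (sub_nonneg.2 hmM)
    _ = exp (m * u / M - u) := by
        rw [← exp_mul]
        congr 1
        field_simp
        ring

lemma abs_one_sub_div_rpow_sub_exp_neg_le (hM : 0 < M) (hmM : 2 * m ≤ M) (hu : 0 ≤ u)
    (hum : u ≤ m) : |(1 - u / M) ^ (M - m) - exp (-u)| ≤ 2 * m / M := by
  have hm : 0 ≤ m := hu.trans hum
  have hlower := exp_neg_le_one_sub_div_rpow hM (by linarith) hu hum
  have hupper := one_sub_div_rpow_le_exp (m := m) hM (by linarith) (by linarith : u ≤ M)
  set a := m * u / M with ha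
  have ha0 : 0 ≤ a := by positivity
  have hau : a - u ≤ -(u / 2) := by
    have : a ≤ u / 2 := by rw [ha, div_le_iff₀ hM]; nlinarith
    linarith
  have hau' : a = 2 * m / M * (u / 2) := by rw [ha]; ring
  rw [abs_of_nonneg (sub_nonneg.2 hlower)]
  calc (1 - u / M) ^ (M - m) - exp (-u) ≤ exp (a - u) - exp (-u) := by linarith
    _ = (exp a - 1) * exp (-u) := by rw [sub_eq_add_neg a, exp_add]; ring
    _ ≤ a * exp a * exp (-u) := by gcongr; exact exp_sub_one_le_mul_exp a
    _ = a * exp (a - u) := by rw [sub_eq_add_neg a, exp_add]; ring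
    _ ≤ 2 * m / M * (u / 2) * exp (-(u / 2)) := by rw [← hau']; gcongr
    _ ≤ 2 * m / M * exp (-1) := by
        rw [mul_assoc]; gcongr; exact mul_exp_neg_le_exp_neg_one _
    _ ≤ 2 * m / M := mul_le_of_le_one_right (by positivity) (exp_le_one_iff.2 (by norm_num))

lemma abs_one_sub_div_pow_rpow_sub_exp_neg_le {b : ℝ} (hb : 2 ≤ b ^ 3) (hu : 0 ≤ u)
    (hub : u ≤ b ^ 3) : |(1 - u / b ^ 12) ^ (b ^ 12 - b ^ 8) - exp (-u)| ≤ b⁻¹ := by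
  have hb0 : 0 < b := by
    by_contra! h
    linarith [Odd.pow_nonpos (by decide : Odd 3) h]
  have hb1 : 1 ≤ b := by
    by_contra! h
    linarith [pow_lt_one₀ hb0.le h (by norm_num : 3 ≠ 0)]
  have hb4 : 2 ≤ b ^ 4 := hb.trans (pow_le_pow_right₀ hb1 (by norm_num))
  calc |(1 - u / b ^ 12) ^ (b ^ 12 - b ^ 8) - exp (-u)| ≤ 2 * b ^ 8 / b ^ 12 :=
        abs_one_sub_div_rpow_sub_exp_neg_le (by positivity) (by nlinarith [pow_pos hb0 8]) hu
          (hub.trans (pow_le_pow_right₀ hb1 (by norm_num)))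
    _ = 2 / b ^ 4 := by field_simp
    _ ≤ b⁻¹ := by
        rw [div_le_iff₀ (by positivity), show b ^ 4 = b * b ^ 3 by ring, ← mul_assoc,
          inv_mul_cancel₀ hb0.ne', one_mul]
        exact hb

end Real

theorem stmt13_general (ρ : ℝ) (N : ℕ) (hN2 : (2 : ℝ) ≤ (N : ℝ) ^ (ρ / 200))
    (ε : ℝ) (hε : ε = ρ / 50) :
    ∀ z : ℝ, -(ε / 4) * Real.log N ≤ z →
      |(1 - Real.exp (-z) / (N : ℝ) ^ ε) ^ ((N : ℝ) ^ ε - (N : ℝ) ^ (2 * ε / 3))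
          - Real.exp (-Real.exp (-z))|
        ≤ (N : ℝ) ^ (-ε / 12) := by
  intro z hz
  have hN : (0 : ℝ) < N := by
    refine Nat.cast_pos.2 (Nat.pos_of_ne_zero fun h => ?_)
    rw [h, Nat.cast_zero] at hN2
    linarith [Real.zero_rpow_le_one (ρ / 200)]
  set b := (N : ℝ) ^ (ε / 12)
  have hpow (k : ℕ) : (N : ℝ) ^ (ε / 12 * k) = b ^ k := Real.rpow_mul_natCast hN.le _ _
  have hb12 : (N : ℝ) ^ ε = b ^ 12 := by rw [← hpow]; congr 1; push_cast; ring
  have hb8 : (N : ℝ) ^ (2 * ε / 3) = b ^ 8 := by rw [← hpow]; congr 1; push_cast; ring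
  have hb3 : (N : ℝ) ^ (ρ / 200) = b ^ 3 := by rw [← hpow, hε]; congr 1; push_cast; ring
  have hu : Real.exp (-z) ≤ b ^ 3 := by
    rw [← hpow, Real.rpow_def_of_pos hN]
    exact Real.exp_le_exp.2 (by push_cast; linarith)
  rw [hb12, hb8, neg_div, Real.rpow_neg hN.le]
  exact Real.abs_one_sub_div_pow_rpow_sub_exp_neg_le (hb3 ▸ hN2) (Real.exp_pos _).le hu

/-- Proposition 5.4 of the paper, inequality (negative sign): with N = N_ρ(A) and ε = ρ/50,
for every z ≥ -(ε/4) log N,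
|(1 − e^{−z}/N^ε)^{N^ε − N^{2ε/3}} − exp(−e^{−z})| ≤ N^{−ε/12}. -/
theorem stmt13 (d : ℕ) (hd : 1 ≤ d) (ρ : ℝ) (hρ : 0 < ρ)
    (A : Set (EuclideanSpace ℝ (Fin d))) (hA : Bornology.IsBounded A) (hne : A.Nonempty)
    (N : ℕ) (hN : N = packNum ρ A) (hN2 : (2 : ℝ) ≤ (N : ℝ) ^ (ρ / 200))
    (ε : ℝ) (hε : ε = ρ / 50) :
    ∀ z : ℝ, -(ε / 4) * Real.log N ≤ z →
      |(1 - Real.exp (-z) / (N : ℝ) ^ ε) ^ ((N : ℝ) ^ ε - (N : ℝ) ^ (2 * ε / 3))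
          - Real.exp (-Real.exp (-z))|
        ≤ (N : ℝ) ^ (-ε / 12) :=
  stmt13_general ρ N hN2 ε hε
end

section
/- Let d ≥ 1, let 0 < δ ≤ d and 0 < c_A < ∞, and let A ⊆ ℝ^d be a bounded set such that lim_{ρ→0+} ρ^δ N_ρ(A) = c_A. Let D ≥ 1 be a real constant and, for all n large enough that N_1(nA) ≥ 2, set ρ_n = D / log N_1(nA), where nA = {n x : x ∈ A}. Then lim_{n→∞} (D / (n log n))^δ · N_{ρ_n}(nA) = δ^δ · c_A. -/
/-!
Rescaling by `n` turns `N_ρ(nA)` into `N_{ρ/n}(A)`, so with `L n = log N_{1/n}(A)` the packing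
number in question is `N(D / (n L n))` for `N = N_·(A)`. Taking logarithms in
`ρ^δ N(ρ) → c_A` gives `log N(ρ) / log ρ⁻¹ → δ`, hence `L n ~ δ log n`. Since
`D / (n L n) → 0⁺`, the hypothesis at that scale gives `(D / (n L n))^δ N(D / (n L n)) → c_A`, and
replacing `L n` by `log n` costs exactly the factor `(L n / log n)^δ → δ^δ`.
-/

open Filter Topology Real

section Scaling

variable {E : Type*} [NormedAddCommGroup E] [NormedSpace ℝ E]

lemma isSep_smul_image {c : ℝ} (hc : 0 < c) {ρ : ℝ} {S : Set E} (h : IsSep (ρ / c) S) :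
    IsSep ρ ((fun x => c • x) '' S) := by
  rintro _ ⟨x, hx, rfl⟩ _ ⟨y, hy, rfl⟩ hne
  rw [dist_smul₀, Real.norm_eq_abs, abs_of_pos hc, ← div_le_iff₀' hc]
  exact h x hx y hy (ne_of_apply_ne _ hne)

lemma exists_isSep_finset_smul_image {c : ℝ} (hc : 0 < c) {ρ : ℝ} {A : Set E} {S : Finset E}
    (hS : ↑S ⊆ A) (hsep : IsSep (ρ / c) (S : Set E)) :
    ∃ T : Finset E, ↑T ⊆ (fun x => c • x) '' A ∧ IsSep ρ (T : Set E) ∧ T.card = S.card := by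
  classical
  refine ⟨S.image (fun x => c • x), ?_, ?_, Finset.card_image_of_injective _ ?_⟩
  · rw [Finset.coe_image]
    exact Set.image_mono hS
  · rw [Finset.coe_image]
    exact isSep_smul_image hc hsep
  · exact smul_right_injective E hc.ne'

lemma packNum_smul_image {c : ℝ} (hc : 0 < c) (ρ : ℝ) (A : Set E) :
    packNum ρ ((fun x => c • x) '' A) = packNum (ρ / c) A := by
  unfold packNum
  congr 1
  ext n
  constructor
  · rintro ⟨S, hS, hsep, rfl⟩
    have hsep' : IsSep (ρ / c / c⁻¹) (S : Set E) := by
      rwa [div_inv_eq_mul, div_mul_cancel₀ _ hc.ne']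
    obtain ⟨T, hT, hTsep, hcard⟩ := exists_isSep_finset_smul_image (inv_pos.2 hc) hS hsep'
    refine ⟨T, ?_, hTsep, hcard⟩
    simpa [Set.image_image, smul_smul, inv_mul_cancel₀ hc.ne'] using hT
  · rintro ⟨S, hS, hsep, rfl⟩
    exact exists_isSep_finset_smul_image hc hS hsep

end Scaling

section PowerLaw

variable {f : ℝ → ℝ} {δ c : ℝ}

lemma tendsto_atTop_of_rpow_mul_tendsto (hf : Tendsto (fun r => r ^ δ * f r) (𝓝[>] 0) (𝓝 c))
    (hc : 0 < c) (hδ : 0 < δ) : Tendsto f (𝓝[>] 0) atTop := by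
  have hinv : Tendsto (fun r : ℝ => r⁻¹ ^ δ) (𝓝[>] 0) atTop :=
    (tendsto_rpow_atTop hδ).comp tendsto_inv_nhdsGT_zero
  refine (hf.pos_mul_atTop hc hinv).congr' ?_
  filter_upwards [self_mem_nhdsWithin] with r (hr : 0 < r)
  rw [Real.inv_rpow hr.le, mul_assoc, mul_comm (f r), ← mul_assoc,
    mul_inv_cancel₀ (Real.rpow_pos_of_pos hr δ).ne', one_mul]

lemma tendsto_log_div_log_inv_of_rpow_mul_tendsto
    (hf : Tendsto (fun r => r ^ δ * f r) (𝓝[>] 0) (𝓝 c)) (hc : 0 < c) (hδ : 0 < δ) :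
    Tendsto (fun r => log (f r) / log r⁻¹) (𝓝[>] 0) (𝓝 δ) := by
  have hlog_inv : Tendsto (fun r : ℝ => log r⁻¹) (𝓝[>] 0) atTop :=
    tendsto_log_atTop.comp tendsto_inv_nhdsGT_zero
  have h := ((hf.log hc.ne').div_atTop hlog_inv).add_const δ
  rw [zero_add] at h
  refine h.congr' ?_
  filter_upwards [self_mem_nhdsWithin,
    (tendsto_atTop_of_rpow_mul_tendsto hf hc hδ).eventually_gt_atTop 0,
    hlog_inv.eventually_gt_atTop 0] with r (hr : 0 < r) hfr hlr
  rw [Real.log_inv] at hlr ⊢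
  have hlog_r : log r ≠ 0 := (neg_pos.1 hlr).ne
  rw [Real.log_mul (Real.rpow_pos_of_pos hr δ).ne' hfr.ne', Real.log_rpow hr]
  field_simp
  ring

lemma tendsto_natCast_inv_nhdsGT_zero : Tendsto (fun n : ℕ => (n : ℝ)⁻¹) atTop (𝓝[>] 0) :=
  tendsto_inv_atTop_nhdsGT_zero.comp tendsto_natCast_atTop_atTop

lemma tendsto_rpow_mul_at_log_scale (hf : Tendsto (fun r => r ^ δ * f r) (𝓝[>] 0) (𝓝 c))
    (hc : 0 < c) (hδ : 0 < δ) {D : ℝ} (hD : 0 < D) :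
    Tendsto (fun n : ℕ => (D / (n * log n)) ^ δ * f (D / (n * log (f (n : ℝ)⁻¹))))
      atTop (𝓝 (δ ^ δ * c)) := by
  set L : ℕ → ℝ := fun n => log (f (n : ℝ)⁻¹)
  have hlog_n : Tendsto (fun n : ℕ => log n) atTop atTop :=
    tendsto_log_atTop.comp tendsto_natCast_atTop_atTop
  have hratio : Tendsto (fun n => L n / log n) atTop (𝓝 δ) := by
    simpa [L, Function.comp_def] using
      (tendsto_log_div_log_inv_of_rpow_mul_tendsto hf hc hδ).comp tendsto_natCast_inv_nhdsGT_zero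
  have hL : Tendsto L atTop atTop := by
    refine (hratio.pos_mul_atTop hδ hlog_n).congr' ?_
    filter_upwards [hlog_n.eventually_gt_atTop 0] with n hn
    exact div_mul_cancel₀ _ hn.ne'
  have hnL : Tendsto (fun n : ℕ => (n : ℝ) * L n) atTop atTop :=
    tendsto_natCast_atTop_atTop.atTop_mul_atTop₀ hL
  have hscale : Tendsto (fun n : ℕ => D / ((n : ℝ) * L n)) atTop (𝓝[>] 0) := by
    refine tendsto_nhdsWithin_iff.2 ⟨tendsto_const_nhds.div_atTop hnL, ?_⟩
    filter_upwards [hnL.eventually_gt_atTop 0] with n hn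
    exact div_pos hD hn
  refine ((hratio.rpow_const (Or.inl hδ.ne')).mul (hf.comp hscale)).congr' ?_
  filter_upwards [hnL.eventually_gt_atTop 0, hlog_n.eventually_gt_atTop 0,
    hL.eventually_gt_atTop 0] with n hnLn hlogn hLn
  have hn : (0 : ℝ) < n := pos_of_mul_pos_left hnLn hLn.le
  have hsplit : D / (n * log n) = L n / log n * (D / (n * L n)) := by
    field_simp
  rw [Function.comp_apply, hsplit, Real.mul_rpow (by positivity) (by positivity), mul_assoc]

end PowerLaw

theorem stmt19_general (d : ℕ) (δ : ℝ) (hδ0 : 0 < δ)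
    (cA : ℝ) (hcA0 : 0 < cA)
    (A : Set (EuclideanSpace ℝ (Fin d)))
    (hlim : Filter.Tendsto (fun ρ : ℝ => ρ ^ δ * (packNum ρ A : ℝ))
      (nhdsWithin 0 (Set.Ioi 0)) (nhds cA))
    (D : ℝ) (hD : 1 ≤ D)
    (ρ : ℕ → ℝ)
    (hρ : ∀ n : ℕ, 2 ≤ packNum 1 ((fun x => (n : ℝ) • x) '' A) →
      ρ n = D / Real.log (packNum 1 ((fun x => (n : ℝ) • x) '' A))) :
    Filter.Tendsto
      (fun n : ℕ =>
        (D / ((n : ℝ) * Real.log n)) ^ δ *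
          (packNum (ρ n) ((fun x => (n : ℝ) • x) '' A) : ℝ))
      Filter.atTop (nhds (δ ^ δ * cA)) := by
  refine (tendsto_rpow_mul_at_log_scale hlim hcA0 hδ0 (by linarith)).congr' ?_
  have hN : ∀ᶠ n : ℕ in atTop, (2 : ℝ) ≤ packNum (n : ℝ)⁻¹ A :=
    ((tendsto_atTop_of_rpow_mul_tendsto hlim hcA0 hδ0).comp
      tendsto_natCast_inv_nhdsGT_zero).eventually_ge_atTop 2
  filter_upwards [hN, eventually_gt_atTop 0] with n hNn hn
  have hscale := packNum_smul_image (A := A) (Nat.cast_pos.2 hn)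
  have hρn : ρ n = D / log (packNum (n : ℝ)⁻¹ A) := by
    rw [hρ n (by rw [hscale, one_div]; exact_mod_cast hNn), hscale, one_div]
  rw [hscale, hρn, div_div, mul_comm (log _)]

/-- If ρ^δ N_ρ(A) → c_A ∈ (0,∞) as ρ → 0+, D ≥ 1 and ρₙ = D / log N₁(nA), then
(D/(n log n))^δ · N_{ρₙ}(nA) → δ^δ · c_A as n → ∞. -/
theorem stmt19 (d : ℕ) (hd : 1 ≤ d) (δ : ℝ) (hδ0 : 0 < δ) (hδd : δ ≤ d)
    (cA : ℝ) (hcA0 : 0 < cA)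
    (A : Set (EuclideanSpace ℝ (Fin d))) (hA : Bornology.IsBounded A)
    (hlim : Filter.Tendsto (fun ρ : ℝ => ρ ^ δ * (packNum ρ A : ℝ))
      (nhdsWithin 0 (Set.Ioi 0)) (nhds cA))
    (D : ℝ) (hD : 1 ≤ D)
    (ρ : ℕ → ℝ)
    (hρ : ∀ n : ℕ, 2 ≤ packNum 1 ((fun x => (n : ℝ) • x) '' A) →
      ρ n = D / Real.log (packNum 1 ((fun x => (n : ℝ) • x) '' A))) :
    Filter.Tendsto
      (fun n : ℕ =>
        (D / ((n : ℝ) * Real.log n)) ^ δ *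
          (packNum (ρ n) ((fun x => (n : ℝ) • x) '' A) : ℝ))
      Filter.atTop (nhds (δ ^ δ * cA)) :=
  stmt19_general d δ hδ0 cA hcA0 A hlim D hD ρ hρ
end
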